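/- A ring R is right Noetherian if and only if the module PI = ∏_{S∈Γ} S⁺ (the product of character modules of a complete set of representatives of finitely presented left R-modules) is an indigent right R-module. -/

import Mathlib

universe u

open LinearMap MulOpposite

/-! Character module -/

/-- The character group `M⁺ = Hom_ℤ(M, ℚ/ℤ)`. -/
abbrev CharMod (M : Type u) [AddCommGroup M] : Type u := M →+ AddCircle (1 : ℚ)

/-- If `M` is a left `S`-module, then `M⁺` is a right `S`-module via `(f • r) m = f (r • m)`. -/
instance CharMod.moduleRight (S : Type u) [Ring S] (M : Type u) [AddCommGroup M]
    [Module S M] : Module Sᵐᵒᵖ (CharMod M) where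
  smul r f := f.comp (DistribMulAction.toAddMonoidHom M (unop r))
  one_smul f := by
    apply AddMonoidHom.ext; intro m
    show f ((unop (1 : Sᵐᵒᵖ)) • m) = f m
    simp
  mul_smul r s f := by
    apply AddMonoidHom.ext; intro m
    show f ((unop (r * s)) • m) = f ((unop s) • ((unop r) • m))
    simp [mul_smul]
  smul_zero r := by apply AddMonoidHom.ext; intro m; rfl
  smul_add r f g := by apply AddMonoidHom.ext; intro m; rfl
  add_smul r s f := by
    apply AddMonoidHom.ext; intro m
    show f ((unop (r + s)) • m) = f ((unop r) • m) + f ((unop s) • m)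
    rw [unop_add, add_smul, map_add]
  zero_smul f := by
    apply AddMonoidHom.ext; intro m
    show f ((unop (0 : Sᵐᵒᵖ)) • m) = 0
    simp

/-- If `M` is a right `S`-module, then `M⁺` is a left `S`-module via `(r • f) m = f (m • r)`. -/
instance CharMod.moduleLeft (S : Type u) [Ring S] (M : Type u) [AddCommGroup M]
    [Module Sᵐᵒᵖ M] : Module S (CharMod M) where
  smul r f := f.comp (DistribMulAction.toAddMonoidHom M (op r))
  one_smul f := by
    apply AddMonoidHom.ext; intro m
    show f ((op (1 : S)) • m) = f m
    simp
  mul_smul r s f := by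
    apply AddMonoidHom.ext; intro m
    show f ((op (r * s)) • m) = f ((op s) • ((op r) • m))
    rw [← mul_smul, ← op_mul]
  smul_zero r := by apply AddMonoidHom.ext; intro m; rfl
  smul_add r f g := by apply AddMonoidHom.ext; intro m; rfl
  add_smul r s f := by
    apply AddMonoidHom.ext; intro m
    show f ((op (r + s)) • m) = f ((op r) • m) + f ((op s) • m)
    rw [op_add, add_smul, map_add]
  zero_smul f := by
    apply AddMonoidHom.ext; intro m
    show f ((op (0 : S)) • m) = 0
    simp

/-! Tensor product of a right module and a left module over a (possibly noncommutative) ring -/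

section Tensor

variable (S : Type u) [Ring S]

/-- The bilinearity relations defining `M ⊗_S N` as a quotient of `M ⊗_ℤ N`. -/
def tensorRel (M N : Type u) [AddCommGroup M] [Module Sᵐᵒᵖ M] [AddCommGroup N] [Module S N] :
    Submodule ℤ (TensorProduct ℤ M N) :=
  Submodule.span ℤ {x | ∃ (m : M) (r : S) (n : N),
    x = (op r • m) ⊗ₜ[ℤ] n - m ⊗ₜ[ℤ] (r • n)}

/-- `M ⊗_S N` for a right `S`-module `M` and a left `S`-module `N`. -/
def RTensor (M N : Type u) [AddCommGroup M] [Module Sᵐᵒᵖ M] [AddCommGroup N] [Module S N] :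
    Type u := TensorProduct ℤ M N ⧸ tensorRel S M N

noncomputable instance (M N : Type u) [AddCommGroup M] [Module Sᵐᵒᵖ M] [AddCommGroup N] [Module S N] :
    AddCommGroup (RTensor S M N) :=
  inferInstanceAs (AddCommGroup (TensorProduct ℤ M N ⧸ tensorRel S M N))

/-- Functoriality of `M ⊗_S -` in the left-module variable. -/
noncomputable def rTensorMap (M : Type u) [AddCommGroup M] [Module Sᵐᵒᵖ M] {N B : Type u}
    [AddCommGroup N] [Module S N] [AddCommGroup B] [Module S B] (g : N →ₗ[S] B) :
    RTensor S M N →ₗ[ℤ] RTensor S M B :=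
  Submodule.mapQ _ _ (TensorProduct.map LinearMap.id g.toAddMonoidHom.toIntLinearMap)
    (by
      rw [tensorRel, Submodule.span_le]
      rintro x ⟨m, r, n, rfl⟩
      refine Submodule.mem_comap.mpr ?_
      erw [map_sub, TensorProduct.map_tmul, TensorProduct.map_tmul]
      simp only [LinearMap.id_apply, AddMonoidHom.coe_toIntLinearMap, LinearMap.toAddMonoidHom_coe]
      rw [map_smul]
      exact Submodule.subset_span ⟨m, r, g n, rfl⟩)

/-- Functoriality of `- ⊗_S N` in the right-module variable. -/
noncomputable def lTensorMap {M B : Type u} [AddCommGroup M] [Module Sᵐᵒᵖ M] [AddCommGroup B]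
    [Module Sᵐᵒᵖ B] (h : M →ₗ[Sᵐᵒᵖ] B) (N : Type u) [AddCommGroup N] [Module S N] :
    RTensor S M N →ₗ[ℤ] RTensor S B N :=
  Submodule.mapQ _ _ (TensorProduct.map h.toAddMonoidHom.toIntLinearMap LinearMap.id)
    (by
      rw [tensorRel, Submodule.span_le]
      rintro x ⟨m, r, n, rfl⟩
      refine Submodule.mem_comap.mpr ?_
      erw [map_sub, TensorProduct.map_tmul, TensorProduct.map_tmul]
      simp only [LinearMap.id_apply, AddMonoidHom.coe_toIntLinearMap, LinearMap.toAddMonoidHom_coe]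
      rw [map_smul]
      exact Submodule.subset_span ⟨h m, r, n, rfl⟩)

end Tensor

/-! Basic relative homological notions -/

section Defs

variable (S : Type u) [Ring S]

/-- `M` is `N`-subinjective: every map `N → M` extends along every embedding of `N`. -/
def Subinjective (N M : Type u) [AddCommGroup N] [Module S N] [AddCommGroup M]
    [Module S M] : Prop :=
  ∀ (K : Type u) [AddCommGroup K] [Module S K] (i : N →ₗ[S] K), Function.Injective i →
    ∀ f : N →ₗ[S] M, ∃ h : K →ₗ[S] M, h ∘ₗ i = f

/-- `M` is an injective module. -/
def InjMod (M : Type u) [AddCommGroup M] [Module S M] : Prop :=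
  ∀ (N : Type u) [AddCommGroup N] [Module S N], Subinjective S N M

/-- `M` is `N`-subprojective. -/
def Subprojective (M N : Type u) [AddCommGroup M] [Module S M] [AddCommGroup N]
    [Module S N] : Prop :=
  ∀ (B : Type u) [AddCommGroup B] [Module S B] (g : B →ₗ[S] N), Function.Surjective g →
    ∀ f : M →ₗ[S] N, ∃ h : M →ₗ[S] B, g ∘ₗ h = f

/-- A monomorphism of left `S`-modules is pure if it stays injective after
tensoring with any right `S`-module. -/
def IsPureMono {A B : Type u} [AddCommGroup A] [Module S A] [AddCommGroup B] [Module S B]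
    (i : A →ₗ[S] B) : Prop :=
  Function.Injective i ∧
    ∀ (M : Type u) [AddCommGroup M] [Module Sᵐᵒᵖ M], Function.Injective (rTensorMap S M i)

/-- `N` is absolutely pure (fp-injective): every embedding of `N` is pure. -/
def AbsPure (N : Type u) [AddCommGroup N] [Module S N] : Prop :=
  ∀ (K : Type u) [AddCommGroup K] [Module S K] (i : N →ₗ[S] K), Function.Injective i →
    IsPureMono S i

/-- `N` is absolutely `M`-pure, for a right module `M`. -/
def AbsMPure (M : Type u) [AddCommGroup M] [Module Sᵐᵒᵖ M] (N : Type u) [AddCommGroup N]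
    [Module S N] : Prop :=
  ∀ (B : Type u) [AddCommGroup B] [Module S B] (i : N →ₗ[S] B), Function.Injective i →
    Function.Injective (rTensorMap S M i)

/-- `M` is pure-injective: maps into `M` extend along pure monomorphisms. -/
def PureInjective (M : Type u) [AddCommGroup M] [Module S M] : Prop :=
  ∀ (A B : Type u) [AddCommGroup A] [Module S A] [AddCommGroup B] [Module S B]
    (i : A →ₗ[S] B), IsPureMono S i → ∀ f : A →ₗ[S] M, ∃ h : B →ₗ[S] M, h ∘ₗ i = f

/-- `M` is indigent: its subinjectivity domain is exactly the injective modules. -/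
def Indigent (M : Type u) [AddCommGroup M] [Module S M] : Prop :=
  ∀ (N : Type u) [AddCommGroup N] [Module S N], Subinjective S N M ↔ InjMod S N

/-- `M` is pi-indigent: `M` is pure-injective and its subinjectivity domain is exactly
the absolutely pure modules. -/
def PiIndigent (M : Type u) [AddCommGroup M] [Module S M] : Prop :=
  PureInjective S M ∧
    ∀ (N : Type u) [AddCommGroup N] [Module S N], Subinjective S N M ↔ AbsPure S N

/-- Flatness via the equational criterion. -/
def FlatMod (M : Type u) [AddCommGroup M] [Module S M] : Prop :=
  ∀ (n : ℕ) (r : Fin n → S) (x : Fin n → M), (∑ i, r i • x i) = 0 →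
    ∃ (m : ℕ) (a : Fin n → Fin m → S) (y : Fin m → M),
      (∀ i, x i = ∑ j, a i j • y j) ∧ ∀ j, (∑ i, r i * a i j) = 0

/-- Finitely presented module. -/
def FPMod (M : Type u) [AddCommGroup M] [Module S M] : Prop :=
  ∃ (n : ℕ) (K : Submodule S (Fin n → S)), K.FG ∧
    Nonempty ((((Fin n → S)) ⧸ K) ≃ₗ[S] M)

/-- `Ext¹_S(M, N) = 0`, expressed by the splitting of every extension of `N` by `M`. -/
def ExtVanish (M N : Type u) [AddCommGroup M] [Module S M] [AddCommGroup N] [Module S N] :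
    Prop :=
  ∀ (B : Type u) [AddCommGroup B] [Module S B] (i : N →ₗ[S] B) (p : B →ₗ[S] M),
    Function.Injective i → Function.Surjective p → LinearMap.range i = LinearMap.ker p →
      ∃ s : M →ₗ[S] B, p ∘ₗ s = LinearMap.id

/-- `Tor₁^S(N, T) = 0` for a right module `N` and a left module `T`. -/
def TorVanish (N : Type u) [AddCommGroup N] [Module Sᵐᵒᵖ N] (T : Type u) [AddCommGroup T]
    [Module S T] : Prop :=
  ∀ (P K : Type u) [AddCommGroup P] [Module Sᵐᵒᵖ P] [AddCommGroup K] [Module Sᵐᵒᵖ K]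
    (i : K →ₗ[Sᵐᵒᵖ] P) (p : P →ₗ[Sᵐᵒᵖ] N), Module.Projective Sᵐᵒᵖ P →
      Function.Injective i → Function.Surjective p →
        LinearMap.range i = LinearMap.ker p → Function.Injective (lTensorMap S i T)

/-- `M` is a Whitehead test module for injectivity (i-test). -/
def ITest (M : Type u) [AddCommGroup M] [Module S M] : Prop :=
  ∀ (N : Type u) [AddCommGroup N] [Module S N], ExtVanish S M N → InjMod S N

/-- `S` is (left) n-saturated: `S` is not semisimple and every finitely generated
non-projective module is i-test. -/
def NSaturated : Prop :=
  ¬ IsSemisimpleRing S ∧ ∀ (M : Type u) [AddCommGroup M] [Module S M],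
    Module.Finite S M → ¬ Module.Projective S M → ITest S M

/-- A submodule is essential if it intersects every nonzero submodule nontrivially. -/
def EssentialIn {M : Type u} [AddCommGroup M] [Module S M] (A : Submodule S M) : Prop :=
  ∀ B : Submodule S M, B ≠ ⊥ → A ⊓ B ≠ ⊥

/-- `M` is a singular module: every element is annihilated by an essential left ideal. -/
def SingularMod (M : Type u) [AddCommGroup M] [Module S M] : Prop :=
  ∀ x : M, EssentialIn S (LinearMap.ker (LinearMap.toSpanSingleton S M x))

/-- `S` is (left) nonsingular: `Z(S) = 0`. -/
def NonsingularRing : Prop :=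
  ∀ r : S, EssentialIn S (LinearMap.ker (LinearMap.toSpanSingleton S S r)) → r = 0

/-- The socle of a module: the supremum of its simple submodules. -/
def socle (M : Type u) [AddCommGroup M] [Module S M] : Submodule S M :=
  sSup {N : Submodule S M | IsAtom N}

/-- von Neumann regular ring. -/
def IsVNR : Prop := ∀ a : S, ∃ r : S, a * r * a = a

/-- (left) V-ring: every simple module is injective. -/
def VRing : Prop :=
  ∀ (M : Type u) [AddCommGroup M] [Module S M], IsSimpleModule S M → InjMod S M

/-- (left) hereditary: every left ideal is projective. -/
def HereditaryRing : Prop := ∀ I : Submodule S S, Module.Projective S I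

/-- (left) semihereditary: every finitely generated left ideal is projective. -/
def SemihereditaryRing : Prop := ∀ I : Submodule S S, I.FG → Module.Projective S I

/-- (left) SI-ring: every singular module is injective. -/
def SIRing : Prop :=
  ∀ (M : Type u) [AddCommGroup M] [Module S M], SingularMod S M → InjMod S M

/-- quasi-Frobenius ring: two-sided Noetherian and self-injective. -/
def QFRing : Prop :=
  IsNoetherianRing S ∧ IsNoetherianRing Sᵐᵒᵖ ∧ InjMod S S ∧ InjMod Sᵐᵒᵖ S

/-- A module is uniserial if its submodules are totally ordered. -/
def Uniserial (M : Type u) [AddCommGroup M] [Module S M] : Prop :=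
  ∀ A B : Submodule S M, A ≤ B ∨ B ≤ A

/-- (left) serial ring: `S` is a finite direct sum of uniserial left ideals. -/
def SerialRing : Prop :=
  ∃ (n : ℕ) (f : Fin n → Submodule S S), (∀ i, Uniserial S (f i)) ∧
    iSupIndep f ∧ iSup f = ⊤

/-- (left) coherent: every finitely generated left ideal is finitely presented. -/
def CoherentRing : Prop := ∀ I : Submodule S S, I.FG → FPMod S I

/-- Indecomposable ring: no nontrivial central idempotents. -/
def IndecompRing : Prop :=
  Nontrivial S ∧ ∀ e : S, e * e = e → (∀ r : S, e * r = r * e) → e = 0 ∨ e = 1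

end Defs

/-!
If `N` is `PI`-subinjective, then maps from `N` to `S⁺` extend along every embedding of `N`, for
every finitely presented `S`. Testing this on `S = Rⁿ / R·a` shows that a finite system
`m aⱼ = vⱼ` solvable in an injective module containing `N` is already solvable in `N`. When `R`
is right Noetherian, every right ideal is finitely generated, so Baer's criterion follows.

Conversely, a non-stabilizing chain of right ideals `Iₙ` gives the non-injective module
`⨁ E(R/Iₙ)`. It is still `PI`-subinjective: every element of `(⨁ Eₙ) ⊗ S` comes from a finite
subsum, which is injective and hence splits off in every extension `K`, so `(⨁ Eₙ) ⊗ S → K ⊗ S` is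
injective; and maps into `S⁺` are characters of these tensor products, which extend because
`ℚ/ℤ` is divisible.
-/

section Injective

variable {A : Type u} [Ring A]

theorem injMod_iff_injective (Q : Type u) [AddCommGroup Q] [Module A Q] :
    InjMod A Q ↔ Module.Injective A Q := by
  refine ⟨fun h => ⟨fun X Y _ _ _ _ i hi f => ?_⟩, fun h N _ _ K _ _ i hi f => ?_⟩
  · obtain ⟨g, hg⟩ := h X Y i hi f
    exact ⟨g, LinearMap.congr_fun hg⟩
  · exact Module.Injective.extension_property A Q N K i hi f

theorem Subinjective.of_injMod {N M : Type u} [AddCommGroup N] [Module A N]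
    [AddCommGroup M] [Module A M] (h : InjMod A N) : Subinjective A N M := by
  intro K _ _ i hi f
  obtain ⟨r, hr⟩ := h N K i hi LinearMap.id
  exact ⟨f ∘ₗ r, by rw [LinearMap.comp_assoc, hr, LinearMap.comp_id]⟩

theorem Subinjective.of_retraction {N M M' : Type u} [AddCommGroup N] [Module A N]
    [AddCommGroup M] [Module A M] [AddCommGroup M'] [Module A M'] (h : Subinjective A N M)
    (p : M →ₗ[A] M') (s : M' →ₗ[A] M) (hps : p ∘ₗ s = LinearMap.id) : Subinjective A N M' := by
  intro K _ _ i hi f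
  obtain ⟨g, hg⟩ := h K i hi (s ∘ₗ f)
  refine ⟨p ∘ₗ g, ?_⟩
  rw [LinearMap.comp_assoc, hg, ← LinearMap.comp_assoc, hps, LinearMap.id_comp]

theorem Subinjective.of_linearEquiv {N M M' : Type u} [AddCommGroup N] [Module A N]
    [AddCommGroup M] [Module A M] [AddCommGroup M'] [Module A M'] (h : Subinjective A N M)
    (e : M ≃ₗ[A] M') : Subinjective A N M' :=
  h.of_retraction _ _ e.comp_symm

theorem Subinjective.of_pi {N : Type u} [AddCommGroup N] [Module A N] {κ : Type u}
    {M : κ → Type u} [∀ j, AddCommGroup (M j)] [∀ j, Module A (M j)]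
    (h : Subinjective A N (∀ j, M j)) (j : κ) : Subinjective A N (M j) := by
  classical
  exact h.of_retraction _ _ (LinearMap.proj_comp_single_same (R := A) (φ := M) j)

theorem Subinjective.pi {N : Type u} [AddCommGroup N] [Module A N] {κ : Type u}
    {M : κ → Type u} [∀ j, AddCommGroup (M j)] [∀ j, Module A (M j)]
    (h : ∀ j, Subinjective A N (M j)) : Subinjective A N (∀ j, M j) := by
  intro K _ _ i hi f
  choose g hg using fun j => h j K i hi (LinearMap.proj j ∘ₗ f)
  exact ⟨LinearMap.pi g, LinearMap.ext fun x => funext fun j => LinearMap.congr_fun (hg j) x⟩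

theorem exists_injective_embedding (M : Type u) [AddCommGroup M] [Module A M] :
    ∃ (E : ModuleCat.{u} A) (e : M →ₗ[A] E), Module.Injective A E ∧ Function.Injective e := by
  let ι := CategoryTheory.Injective.ι (ModuleCat.of A M)
  exact ⟨_, ι.hom, Module.injective_module_of_injective_object A _
    (inj := CategoryTheory.Injective.injective_under _),
    (ModuleCat.mono_iff_injective ι).mp inferInstance⟩

end Injective

section CharMod

variable {R : Type u} [Ring R]

theorem CharMod.smul_apply {M : Type u} [AddCommGroup M] [Module R M] (c : Rᵐᵒᵖ)
    (f : CharMod M) (y : M) : (c • f) y = f (unop c • y) := rfl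

def CharMod.congr {G H : Type u} [AddCommGroup G] [Module R G] [AddCommGroup H] [Module R H]
    (e : G ≃ₗ[R] H) : CharMod H ≃ₗ[Rᵐᵒᵖ] CharMod G where
  toFun f := f.comp e.toAddMonoidHom
  invFun f := f.comp e.symm.toAddMonoidHom
  left_inv f := AddMonoidHom.ext fun y => congrArg f (e.apply_symm_apply y)
  right_inv f := AddMonoidHom.ext fun y => congrArg f (e.symm_apply_apply y)
  map_add' _ _ := rfl
  map_smul' c f := AddMonoidHom.ext fun y => congrArg f (e.map_smul (unop c) y).symm

theorem Subinjective.charMod_of_complete {ι : Type u} (Γ : ι → Type u)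
    [∀ i, AddCommGroup (Γ i)] [∀ i, Module R (Γ i)]
    (hcomplete : ∀ (F : Type u) [AddCommGroup F] [Module R F], FPMod R F →
      ∃ i, Nonempty (F ≃ₗ[R] Γ i))
    {N : Type u} [AddCommGroup N] [Module Rᵐᵒᵖ N]
    (h : Subinjective Rᵐᵒᵖ N (∀ i, CharMod (Γ i)))
    {G : Type u} [AddCommGroup G] [Module R G] (hG : FPMod R G) :
    Subinjective Rᵐᵒᵖ N (CharMod G) := by
  obtain ⟨i, ⟨e⟩⟩ := hcomplete G hG
  exact (h.of_pi i).of_linearEquiv (CharMod.congr e)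

end CharMod

theorem AddSubgroup.mem_of_forall_character {B : Type u} [AddCommGroup B] (D : AddSubgroup B)
    {v : B} (h : ∀ χ : CharMod B, (∀ d ∈ D, χ d = 0) → χ v = 0) : v ∈ D := by
  rw [← QuotientAddGroup.eq_zero_iff]
  refine CharacterModule.eq_zero_of_character_apply fun c =>
    h (AddMonoidHom.comp (c : CharMod (B ⧸ D)) (QuotientAddGroup.mk' D)) fun d hd => ?_
  show c (d : B ⧸ D) = 0
  rw [(QuotientAddGroup.eq_zero_iff d).mpr hd, map_zero]

section Solvability

variable {R : Type u} [Ring R] {N : Type u} [AddCommGroup N] [Module Rᵐᵒᵖ N] {n : ℕ}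

def coordSMul : N →+ (Fin n → R) →+ (Fin n → N) :=
  AddMonoidHom.mk'
    (fun m =>
      { toFun r j := op (r j) • m
        map_zero' := funext fun j => by simp
        map_add' r s := funext fun j => by simp [add_smul] })
    fun m m' => AddMonoidHom.ext fun r => funext fun j => smul_add _ m m'

theorem coordSMul_apply (m : N) (r : Fin n → R) (j : Fin n) :
    coordSMul m r j = op (r j) • m :=
  rfl

theorem coordSMul_op_smul (c : R) (m : N) (r : Fin n → R) :
    coordSMul (op c • m) r = coordSMul m (c • r) :=
  funext fun j => by simp [coordSMul_apply, ← mul_smul]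

theorem coordSMul_single (m : N) (j : Fin n) :
    coordSMul m (Pi.single j (1 : R)) = Pi.single j m := by
  ext j'
  rcases eq_or_ne j' j with rfl | h <;> simp [coordSMul_apply, *]

/-- Under `N ⊗_R (Rⁿ / R·a) ≅ Nⁿ / {(m aⱼ)ⱼ}`, this is the map `N → (Rⁿ / R·a)⁺` corresponding to
a character of the right-hand side. -/
def CharMod.ofCoordSMul (a : Fin n → R) (χ : (Fin n → N) →+ AddCircle (1 : ℚ))
    (hχ : ∀ m, χ (coordSMul m a) = 0) : N →ₗ[Rᵐᵒᵖ] CharMod ((Fin n → R) ⧸ R ∙ a) where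
  toFun m := QuotientAddGroup.lift (R ∙ a).toAddSubgroup (χ.comp (coordSMul m)) fun r hr => by
    obtain ⟨c, rfl⟩ := Submodule.mem_span_singleton.mp hr
    simp [← coordSMul_op_smul, hχ]
  map_add' m m' := AddMonoidHom.ext fun r => QuotientAddGroup.induction_on r fun r => by
    show χ (coordSMul (m + m') r) = χ (coordSMul m r) + χ (coordSMul m' r)
    rw [map_add, AddMonoidHom.add_apply, map_add]
  map_smul' c m := AddMonoidHom.ext fun r => QuotientAddGroup.induction_on r fun r => by
    show χ (coordSMul (c • m) r) = χ (coordSMul m (unop c • r))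
    rw [← coordSMul_op_smul, op_unop]

theorem CharMod.ofCoordSMul_apply_mk (a : Fin n → R) (χ : (Fin n → N) →+ AddCircle (1 : ℚ))
    (hχ : ∀ m, χ (coordSMul m a) = 0) (m : N) (r : Fin n → R) :
    CharMod.ofCoordSMul a χ hχ m (Submodule.Quotient.mk r) = χ (coordSMul m r) :=
  rfl

theorem exists_smul_eq_of_subinjective {K : Type u} [AddCommGroup K] [Module Rᵐᵒᵖ K]
    (a : Fin n → R) (hsub : Subinjective Rᵐᵒᵖ N (CharMod ((Fin n → R) ⧸ R ∙ a)))
    (i : N →ₗ[Rᵐᵒᵖ] K) (hi : Function.Injective i) (v : Fin n → N) (k : K)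
    (hk : ∀ j, op (a j) • k = i (v j)) : ∃ m : N, ∀ j, op (a j) • m = v j := by
  suffices hv : v ∈ (coordSMul.flip a).range by
    obtain ⟨m, hm⟩ := hv
    exact ⟨m, fun j => congrFun hm j⟩
  refine AddSubgroup.mem_of_forall_character _ fun χ hχ => ?_
  have hχa : ∀ m, χ (coordSMul m a) = 0 := fun m => hχ _ ⟨m, rfl⟩
  obtain ⟨g, hg⟩ := hsub K i hi (CharMod.ofCoordSMul a χ hχa)
  let e (j : Fin n) : (Fin n → R) ⧸ R ∙ a := Submodule.Quotient.mk (Pi.single j 1)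
  calc χ v = ∑ j, χ (coordSMul (v j) (Pi.single j (1 : R))) := by
        simp only [coordSMul_single, ← map_sum, Finset.univ_sum_single v]
    _ = ∑ j, g (i (v j)) (e j) := by
        simp only [← LinearMap.comp_apply, hg, e, CharMod.ofCoordSMul_apply_mk]
    _ = ∑ j, g k (a j • e j) := by
        simp only [← hk, map_smul, CharMod.smul_apply, unop_op]
    _ = g k (Submodule.Quotient.mk a) := by
        have ha : ∑ j, a j • Pi.single j (1 : R) = a := by
          ext j
          simp [Finset.sum_apply, Pi.single_apply]
        simp only [e, ← Submodule.mkQ_apply, ← map_smul, ← map_sum, ha]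
    _ = 0 := by
        rw [(Submodule.Quotient.mk_eq_zero _).mpr (Submodule.mem_span_singleton_self a), map_zero]

end Solvability

section Baer

variable {R : Type u} [Ring R]

theorem fpMod_quotient_span_singleton {n : ℕ} (a : Fin n → R) :
    FPMod R ((Fin n → R) ⧸ R ∙ a) :=
  ⟨n, _, Submodule.fg_span_singleton a, ⟨LinearEquiv.refl R _⟩⟩

theorem baer_of_subinjective_charMod [IsNoetherianRing Rᵐᵒᵖ] {N : Type u} [AddCommGroup N]
    [Module Rᵐᵒᵖ N]
    (h : ∀ (G : Type u) [AddCommGroup G] [Module R G], FPMod R G →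
      Subinjective Rᵐᵒᵖ N (CharMod G)) :
    Module.Baer Rᵐᵒᵖ N := by
  intro I φ
  obtain ⟨n, b, rfl⟩ :=
    Submodule.fg_iff_exists_fin_generating_family.mp (IsNoetherian.noetherian I)
  have hb (j : Fin n) : b j ∈ Submodule.span Rᵐᵒᵖ (Set.range b) :=
    Submodule.subset_span ⟨j, rfl⟩
  obtain ⟨E, e, hE, he⟩ := exists_injective_embedding (A := Rᵐᵒᵖ) N
  obtain ⟨ψ, hψ⟩ := Module.Injective.extension_property Rᵐᵒᵖ E _ _ (Submodule.subtype _)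
    Subtype.val_injective (e ∘ₗ φ)
  -- `ψ 1` solves `k bⱼ = φ bⱼ` in `E`, hence the system is solvable in `N`.
  obtain ⟨m, hm⟩ := exists_smul_eq_of_subinjective (fun j => unop (b j))
    (h _ (fpMod_quotient_span_singleton _)) e he (fun j => φ ⟨b j, hb j⟩) (ψ 1) fun j => by
      rw [op_unop, ← map_smul, smul_eq_mul, mul_one]
      exact LinearMap.congr_fun hψ ⟨b j, hb j⟩
  have hφ : LinearMap.toSpanSingleton Rᵐᵒᵖ N m ∘ₗ Submodule.subtype _ = φ := by
    refine LinearMap.ext_on Submodule.span_span_coe_preimage ?_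
    rintro ⟨x, hx⟩ ⟨j, rfl⟩
    simpa using hm j
  exact ⟨LinearMap.toSpanSingleton Rᵐᵒᵖ N m, fun x hx => LinearMap.congr_fun hφ ⟨x, hx⟩⟩

end Baer

section RTensor

variable (S : Type u) [Ring S]

noncomputable def RTensor.mk (M N : Type u) [AddCommGroup M] [Module Sᵐᵒᵖ M] [AddCommGroup N]
    [Module S N] : M →ₗ[ℤ] N →ₗ[ℤ] RTensor S M N :=
  (TensorProduct.mk ℤ M N).compr₂ (tensorRel S M N).mkQ

variable {S}

theorem RTensor.induction_on {M N : Type u} [AddCommGroup M] [Module Sᵐᵒᵖ M] [AddCommGroup N]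
    [Module S N] {P : RTensor S M N → Prop} (z : RTensor S M N) (zero : P 0)
    (tmul : ∀ m x, P (RTensor.mk S M N m x)) (add : ∀ z w, P z → P w → P (z + w)) : P z := by
  obtain ⟨y, rfl⟩ := Submodule.Quotient.mk_surjective _ z
  induction y using TensorProduct.induction_on with
  | zero => exact zero
  | tmul m x => exact tmul m x
  | add y y' hy hy' => exact add _ _ hy hy'

theorem RTensor.mk_op_smul {M N : Type u} [AddCommGroup M] [Module Sᵐᵒᵖ M] [AddCommGroup N]
    [Module S N] (r : S) (m : M) (x : N) :
    RTensor.mk S M N (op r • m) x = RTensor.mk S M N m (r • x) :=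
  (Submodule.Quotient.eq _).mpr (Submodule.subset_span ⟨m, r, x, rfl⟩)

variable {M B C : Type u} [AddCommGroup M] [Module Sᵐᵒᵖ M] [AddCommGroup B] [Module Sᵐᵒᵖ B]
  [AddCommGroup C] [Module Sᵐᵒᵖ C] (N : Type u) [AddCommGroup N] [Module S N]

theorem lTensorMap_mk (h : M →ₗ[Sᵐᵒᵖ] B) (m : M) (x : N) :
    lTensorMap S h N (RTensor.mk S M N m x) = RTensor.mk S B N (h m) x :=
  rfl

theorem lTensorMap_comp (h₂ : B →ₗ[Sᵐᵒᵖ] C) (h₁ : M →ₗ[Sᵐᵒᵖ] B) :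
    lTensorMap S (h₂ ∘ₗ h₁) N = lTensorMap S h₂ N ∘ₗ lTensorMap S h₁ N :=
  Submodule.linearMap_qext _ (TensorProduct.ext' fun _ _ => rfl)

end RTensor

section CharModTensor

variable {R : Type u} [Ring R] {G : Type u} [AddCommGroup G] [Module R G]

noncomputable def CharMod.toRTensor {M : Type u} [AddCommGroup M] [Module Rᵐᵒᵖ M]
    (f : M →ₗ[Rᵐᵒᵖ] CharMod G) : CharMod (RTensor R M G) :=
  ((tensorRel R M G).liftQ
    (TensorProduct.liftAddHom f.toAddMonoidHom fun z m x => by simp).toIntLinearMap <| by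
      refine Submodule.span_le.mpr ?_
      rintro _ ⟨m, r, x, rfl⟩
      simp [CharMod.smul_apply]).toAddMonoidHom

noncomputable def CharMod.ofRTensor {M : Type u} [AddCommGroup M] [Module Rᵐᵒᵖ M]
    (χ : CharMod (RTensor R M G)) : M →ₗ[Rᵐᵒᵖ] CharMod G where
  toFun m := (χ.toIntLinearMap ∘ₗ RTensor.mk R M G m).toAddMonoidHom
  map_add' m m' := by ext; simp
  map_smul' c m := AddMonoidHom.ext fun x => by
    show χ (RTensor.mk R M G (c • m) x) = χ (RTensor.mk R M G m (unop c • x))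
    rw [← RTensor.mk_op_smul, op_unop]

theorem CharMod.exists_extension_of_lTensorMap_injective {N K : Type u} [AddCommGroup N]
    [Module Rᵐᵒᵖ N] [AddCommGroup K] [Module Rᵐᵒᵖ K] (i : N →ₗ[Rᵐᵒᵖ] K)
    (hi : Function.Injective (lTensorMap R i G)) (f : N →ₗ[Rᵐᵒᵖ] CharMod G) :
    ∃ g : K →ₗ[Rᵐᵒᵖ] CharMod G, g ∘ₗ i = f := by
  obtain ⟨χ, hχ⟩ := Module.Baer.extension_property_addMonoidHom (Module.Baer.of_divisible _)
    (lTensorMap R i G).toAddMonoidHom hi (CharMod.toRTensor f)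
  exact ⟨CharMod.ofRTensor χ, LinearMap.ext fun m => AddMonoidHom.ext fun x =>
    DFunLike.congr_fun hχ (RTensor.mk R N G m x)⟩

end CharModTensor

section DirectSum

open DirectSum

variable (A : Type u) [Ring A] {κ : Type*} [DecidableEq κ] (E : κ → Type u)
  [∀ j, AddCommGroup (E j)] [∀ j, Module A (E j)]

def DirectSum.restrictFinset (s : Finset κ) : (⨁ j, E j) →ₗ[A] ∀ j : (s : Set κ), E j :=
  LinearMap.pi fun j => DirectSum.component A κ E j

def DirectSum.ofFinset (s : Finset κ) : (∀ j : (s : Set κ), E j) →ₗ[A] ⨁ j, E j where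
  toFun := DFinsupp.mk s
  map_add' _ _ := DFinsupp.mk_add
  map_smul' := DFinsupp.mk_smul

theorem DirectSum.ofFinset_apply (s : Finset κ) (x : ∀ j : (s : Set κ), E j) (j : κ) :
    ofFinset A E s x j = if h : j ∈ s then x ⟨j, h⟩ else 0 :=
  DFinsupp.mk_apply

theorem DirectSum.restrictFinset_comp_ofFinset (s : Finset κ) :
    restrictFinset A E s ∘ₗ ofFinset A E s = LinearMap.id :=
  LinearMap.ext fun x => funext fun j => by
    rw [LinearMap.comp_apply, restrictFinset, LinearMap.pi_apply,
      ← DirectSum.apply_eq_component, ofFinset_apply, dif_pos (Finset.mem_coe.mp j.2)]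
    rfl

theorem DirectSum.ofFinset_restrictFinset {s : Finset κ} {a : ⨁ j, E j}
    (ha : ∀ j ∉ s, a j = 0) : ofFinset A E s (restrictFinset A E s a) = a := by
  refine DFinsupp.ext fun j => ?_
  by_cases hj : j ∈ s
  · rw [ofFinset_apply, dif_pos hj]
    rfl
  · rw [ofFinset_apply, dif_neg hj, ha j hj]

end DirectSum

section AbsolutelyPure

open DirectSum

variable {R : Type u} [Ring R] {κ : Type} [DecidableEq κ] {E : κ → Type u}
  [∀ j, AddCommGroup (E j)] [∀ j, Module Rᵐᵒᵖ (E j)] {G : Type u} [AddCommGroup G] [Module R G]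

theorem RTensor.exists_finset_lTensorMap_truncate (z : RTensor R (⨁ j, E j) G) :
    ∃ s : Finset κ, ∀ t, s ⊆ t →
      lTensorMap R (ofFinset Rᵐᵒᵖ E t ∘ₗ restrictFinset Rᵐᵒᵖ E t) G z = z := by
  induction z using RTensor.induction_on with
  | zero => exact ⟨∅, fun t _ => map_zero _⟩
  | tmul a x =>
    classical
    refine ⟨DFinsupp.support a, fun t ht => ?_⟩
    rw [lTensorMap_mk, LinearMap.comp_apply, ofFinset_restrictFinset]
    intro j hj
    by_contra h
    exact hj (ht (DFinsupp.mem_support_iff.mpr h))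
  | add z w hz hw =>
    obtain ⟨s, hs⟩ := hz
    obtain ⟨s', hs'⟩ := hw
    refine ⟨s ∪ s', fun t ht => ?_⟩
    rw [map_add, hs t (Finset.union_subset_left ht), hs' t (Finset.union_subset_right ht)]

theorem lTensorMap_injective_of_directSum [∀ j, Module.Injective Rᵐᵒᵖ (E j)] {K : Type u}
    [AddCommGroup K] [Module Rᵐᵒᵖ K] (i : (⨁ j, E j) →ₗ[Rᵐᵒᵖ] K) (hi : Function.Injective i) :
    Function.Injective (lTensorMap R i G) := by
  refine (injective_iff_map_eq_zero _).mpr fun z hz => ?_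
  obtain ⟨s, hs⟩ := RTensor.exists_finset_lTensorMap_truncate z
  set ι := ofFinset Rᵐᵒᵖ E s
  set π := restrictFinset Rᵐᵒᵖ E s
  have hπι : π ∘ₗ ι = LinearMap.id := restrictFinset_comp_ofFinset Rᵐᵒᵖ E s
  have hι : Function.Injective ι :=
    Function.LeftInverse.injective (g := π) (LinearMap.congr_fun hπι)
  obtain ⟨ρ, hρ⟩ := Module.Injective.extension_property Rᵐᵒᵖ (∀ j : (s : Set κ), E j) _ _
    (i ∘ₗ ι) (hi.comp hι) LinearMap.id
  have hπz : lTensorMap R π G z = 0 := calc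
    lTensorMap R π G z = lTensorMap R (ρ ∘ₗ i ∘ₗ ι ∘ₗ π) G z := by
      rw [← LinearMap.comp_assoc, ← LinearMap.comp_assoc, LinearMap.comp_assoc ι, hρ,
        LinearMap.id_comp]
    _ = lTensorMap R ρ G (lTensorMap R i G (lTensorMap R (ι ∘ₗ π) G z)) := by
      simp only [lTensorMap_comp, LinearMap.comp_apply]
    _ = 0 := by rw [hs s subset_rfl, hz, map_zero]
  rw [← hs s subset_rfl, lTensorMap_comp, LinearMap.comp_apply, hπz, map_zero]

end AbsolutelyPure

theorem Subinjective.directSum_charMod {R : Type u} [Ring R] {κ : Type} [DecidableEq κ]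
    {E : κ → Type u} [∀ j, AddCommGroup (E j)] [∀ j, Module Rᵐᵒᵖ (E j)]
    [∀ j, Module.Injective Rᵐᵒᵖ (E j)] (G : Type u) [AddCommGroup G] [Module R G] :
    Subinjective Rᵐᵒᵖ (DirectSum κ E) (CharMod G) := fun _ _ _ i hi =>
  CharMod.exists_extension_of_lTensorMap_injective i (lTensorMap_injective_of_directSum i hi)

section NotInjective

open DirectSum

variable {A : Type u} [Ring A]

noncomputable def DirectSum.linearMapOfFinite {κ : Type*} {E : κ → Type*}
    [∀ j, AddCommGroup (E j)] [∀ j, Module A (E j)] {M : Type*} [AddCommGroup M] [Module A M]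
    (c : ∀ j, M →ₗ[A] E j) (hc : ∀ x, ∃ s : Finset κ, ∀ j ∉ s, c j x = 0) : M →ₗ[A] ⨁ j, E j where
  toFun x := DFinsupp.mk' (fun j => c j x)
    (Trunc.mk ⟨(hc x).choose.val, fun j => or_iff_not_imp_left.mpr ((hc x).choose_spec j)⟩)
  map_add' x y := DFinsupp.ext fun j => map_add (c j) x y
  map_smul' r x := DFinsupp.ext fun j => map_smul (c j) r x

theorem DirectSum.not_injective_of_chain (f : ℕ →o Ideal A) (hf : ∀ n, ∃ m, f n < f m)
    (E : ℕ → Type u) [∀ n, AddCommGroup (E n)] [∀ n, Module A (E n)]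
    (e : ∀ n, (A ⧸ f n) →ₗ[A] E n) (he : ∀ n, Function.Injective (e n)) :
    ¬ Module.Injective A (⨁ n, E n) := by
  classical
  intro hinj
  have hker (n : ℕ) (x : A) : e n (Submodule.Quotient.mk x) = 0 ↔ x ∈ f n := by
    rw [(he n).eq_iff' (map_zero _), Submodule.Quotient.mk_eq_zero]
  let I := ⨆ n, f n
  let φ : I →ₗ[A] ⨁ n, E n :=
    linearMapOfFinite (fun n => e n ∘ₗ (f n).mkQ ∘ₗ I.subtype) fun x => by
      obtain ⟨k, hk⟩ := (Submodule.mem_iSup_of_chain f x).mp x.2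
      exact ⟨Finset.range k, fun n hn =>
        (hker n x).mpr (f.monotone (not_lt.mp (mt Finset.mem_range.mpr hn)) hk)⟩
  obtain ⟨ψ, hψ⟩ := Module.Baer.of_injective hinj I φ
  -- `ψ x = x • ψ 1` vanishes outside the finite support of `ψ 1`, while `φ` does not.
  obtain ⟨n, hn⟩ := Infinite.exists_notMem_finset (DFinsupp.support (ψ 1))
  obtain ⟨m, hlt⟩ := hf n
  obtain ⟨x, hxm, hxn⟩ := SetLike.exists_of_lt hlt
  have hxI : x ∈ I := Submodule.mem_iSup_of_mem m hxm
  refine hxn ((hker n x).mp ?_)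
  calc e n (Submodule.Quotient.mk x) = φ ⟨x, hxI⟩ n := rfl
    _ = (x • ψ 1) n := by rw [← hψ x hxI, ← map_smul, smul_eq_mul, mul_one]
    _ = 0 := by rw [DFinsupp.smul_apply, DFinsupp.notMem_support_iff.mp hn, smul_zero]

end NotInjective

theorem stmt_4_general {R : Type u} [Ring R] (ι : Type u) (Γ : ι → Type u)
    [∀ i, AddCommGroup (Γ i)] [∀ i, Module R (Γ i)]
    (hcomplete : ∀ (F : Type u) [AddCommGroup F] [Module R F], FPMod R F →
      ∃ i, Nonempty (F ≃ₗ[R] Γ i)) :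
    IsNoetherianRing Rᵐᵒᵖ ↔ Indigent Rᵐᵒᵖ (∀ i, CharMod (Γ i)) := by
  refine ⟨fun _ N _ _ => ⟨fun hsub => ?_, Subinjective.of_injMod⟩, fun hInd => ?_⟩
  · exact (injMod_iff_injective N).mpr (baer_of_subinjective_charMod fun G _ _ hG =>
      hsub.charMod_of_complete Γ hcomplete hG).injective
  · by_contra hN
    obtain ⟨f, hf⟩ : ∃ f : ℕ →o Ideal Rᵐᵒᵖ, ∀ n, ∃ m, n ≤ m ∧ f n < f m := by
      simpa [isNoetherianRing_iff, isNoetherian_iff', wellFoundedGT_iff_monotone_chain_condition']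
        using hN
    choose E e hE he using fun n => exists_injective_embedding (A := Rᵐᵒᵖ) (Rᵐᵒᵖ ⧸ f n)
    have hsub : Subinjective Rᵐᵒᵖ (DirectSum ℕ fun n => E n) (∀ i, CharMod (Γ i)) :=
      Subinjective.pi fun i => Subinjective.directSum_charMod (Γ i)
    exact DirectSum.not_injective_of_chain f (fun n => (hf n).imp fun _ => And.right) _ e he
      ((injMod_iff_injective _).mp ((hInd _).mp hsub))

theorem stmt_4 {R : Type u} [Ring R] (ι : Type u) (Γ : ι → Type u)
    [∀ i, AddCommGroup (Γ i)] [∀ i, Module R (Γ i)]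
    (hfp : ∀ i, FPMod R (Γ i))
    (hirr : ∀ i j, i ≠ j → IsEmpty (Γ i ≃ₗ[R] Γ j))
    (hcomplete : ∀ (F : Type u) [AddCommGroup F] [Module R F], FPMod R F →
      ∃ i, Nonempty (F ≃ₗ[R] Γ i)) :
    IsNoetherianRing Rᵐᵒᵖ ↔ Indigent Rᵐᵒᵖ (∀ i, CharMod (Γ i)) :=
  stmt_4_general ι Γ hcomplete
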